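/- Let G be a directed graph, P a simple directed path in G, u, v vertices such that (1) there exists a u→v path in G through V(P), (2) first*(u) = p_i and last*(v) = p_j exist and are strongly connected in G. Let p* be the latest vertex of P strongly connected to p_i, and let W be the union of {p_m}, L_m, and L^R_m over all indices m with p_m strongly connected to p_i, where L_m is the m-th forward layer and L^R_m the m-th reverse layer. Then every u→v path Q in G that meets V(P) lies entirely within the induced subgraph G[W]; moreover u reaches p* in G[W] and p* reaches v in G[W]. -/

import Mathlib

/-- A (directed) walk in digraph `G` from `a` to `b`, given as its list of vertices. -/
def DiWalk {V : Type*} (G : V → V → Prop) (a b : V) (l : List V) : Prop :=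
  List.Chain' G l ∧ l.head? = some a ∧ l.getLast? = some b

/-- `Sat G p a b`: there is a satellite walk (internal vertices avoiding `p`)
from `a` to `b` in `G`. -/
def Sat {V : Type*} (G : V → V → Prop) (p : List V) (a b : V) : Prop :=
  ∃ l, DiWalk G a b l ∧ ∀ w ∈ l.tail.dropLast, w ∉ p

/-- Strong connectivity (mutual reachability) in `G`. -/
def SConn {V : Type*} (G : V → V → Prop) (a b : V) : Prop :=
  Relation.ReflTransGen G a b ∧ Relation.ReflTransGen G b a

/-- The `m`-th forward layer. -/
def Layer {V : Type*} (G : V → V → Prop) (p : List V) (m : Fin p.length) : Set V :=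
  {w | w ∉ p ∧ Sat G p (p.get m) w ∧
    ∀ j : Fin p.length, (m : ℕ) < (j : ℕ) → ¬ Sat G p (p.get j) w}

/-- The `m`-th reverse layer. -/
def RLayer {V : Type*} (G : V → V → Prop) (p : List V) (m : Fin p.length) : Set V :=
  {w | w ∉ p ∧ Sat G p w (p.get m) ∧
    ∀ j : Fin p.length, (j : ℕ) < (m : ℕ) → ¬ Sat G p w (p.get j)}

/-!
Since the `P`-vertices satellite-reachable from `u` come after `p_i` and those satellite-reaching
`v` come before `p_j`, which reaches `p_i`, the vertex `p_i` reaches every vertex of a `u → v` walk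
from its first `P`-vertex on, and every vertex up to its last `P`-vertex reaches `p_i`. A walk
vertex `w ∉ P` preceded by a `P`-vertex lies in the forward layer `L_m` of the largest `m` with
a satellite path `p_m → w`; otherwise it lies in the reverse layer `L^R_m` of the smallest `m`
with a satellite path `w → p_m`. In both cases `p_m` is strongly connected to `p_i`, through the
walk, the path `P`, and satellite paths concatenated at `w`. The walks `u → p_i → p*` and
`p* → p_i → p_j → v` meet `P`, so the same argument places them inside `W`.
-/

open Relation

theorem List.exists_append_cons_first {α : Type*} {P : α → Prop} {l : List α}
    (h : ∃ x ∈ l, P x) : ∃ l₁ x l₂, l = l₁ ++ x :: l₂ ∧ P x ∧ ∀ y ∈ l₁, ¬ P y := by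
  induction l with
  | nil => simp at h
  | cons a t ih =>
    by_cases ha : P a
    · exact ⟨[], a, t, rfl, ha, by simp⟩
    · obtain ⟨l₁, x, l₂, rfl, hx, hl₁⟩ := ih (by simpa [ha] using h)
      exact ⟨a :: l₁, x, l₂, rfl, hx, by simpa [ha] using hl₁⟩

theorem List.exists_append_cons_last {α : Type*} {P : α → Prop} {l : List α}
    (h : ∃ x ∈ l, P x) : ∃ l₁ x l₂, l = l₁ ++ x :: l₂ ∧ P x ∧ ∀ y ∈ l₂, ¬ P y := by
  obtain ⟨l₁, x, l₂, hl, hx, hl₁⟩ :=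
    List.exists_append_cons_first (l := l.reverse) (by simpa using h)
  exact ⟨l₂.reverse, x, l₁.reverse, by simpa using congrArg List.reverse hl, hx,
    by simpa using hl₁⟩

theorem List.IsChain.reflTransGen_get {α : Type*} {r : α → α → Prop} {l : List α}
    (h : l.IsChain r) {m m' : Fin l.length} (hm : m ≤ m') :
    ReflTransGen r (l.get m) (l.get m') := by
  rcases hm.eq_or_lt with rfl | hlt
  · exact .refl
  · exact List.pairwise_iff_get.mp (h.imp fun _ _ => ReflTransGen.single).pairwise m m' hlt

section

variable {V : Type*} {G : V → V → Prop} {p l l₁ l₂ : List V} {a b c w : V}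

theorem diWalk_iff_isChain :
    DiWalk G a b l ↔ l.IsChain G ∧ l.head? = some a ∧ l.getLast? = some b :=
  Iff.rfl

theorem diWalk_iff : DiWalk G a b l ↔
    ∃ t, l = a :: t ∧ (a :: t).IsChain G ∧ (a :: t).getLast (List.cons_ne_nil _ _) = b := by
  rw [diWalk_iff_isChain]
  cases l with
  | nil => simp
  | cons x t =>
    simp only [List.head?_cons, Option.some.injEq, List.cons.injEq]
    grind

theorem DiWalk.reflTransGen (h : DiWalk G a b l) : ReflTransGen G a b := by
  obtain ⟨t, -, ht, hb⟩ := diWalk_iff.mp h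
  exact List.relationReflTransGen_of_exists_isChain_cons t ht hb

theorem exists_diWalk_of_reflTransGen (h : ReflTransGen G a b) : ∃ l, DiWalk G a b l := by
  obtain ⟨t, ht, hb⟩ := List.exists_isChain_cons_of_relationReflTransGen h
  exact ⟨a :: t, diWalk_iff.mpr ⟨t, rfl, ht, hb⟩⟩

theorem DiWalk.head_mem (h : DiWalk G a b l) : a ∈ l := List.mem_of_mem_head? h.2.1

theorem DiWalk.getLast_mem (h : DiWalk G a b l) : b ∈ l := List.mem_of_mem_getLast? h.2.2

theorem DiWalk.append (h₁ : DiWalk G a w l₁) (h₂ : DiWalk G w b l₂) :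
    DiWalk G a b (l₁ ++ l₂.tail) := by
  rw [diWalk_iff_isChain] at h₁ h₂ ⊢
  obtain ⟨hc₁, hh₁, hl₁⟩ := h₁
  obtain ⟨hc₂, hh₂, hl₂⟩ := h₂
  obtain ⟨s, rfl⟩ := List.getLast?_eq_some_iff.mp hl₁
  obtain ⟨t, rfl⟩ := List.head?_eq_some_iff.mp hh₂
  refine ⟨?_, ?_, ?_⟩
  · simpa using List.isChain_split.mpr ⟨hc₁, hc₂⟩
  · simpa using hh₁
  · simpa [List.getLast?_append] using hl₂

theorem DiWalk.split (h : DiWalk G a b (l₁ ++ w :: l₂)) :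
    DiWalk G a w (l₁ ++ [w]) ∧ DiWalk G w b (w :: l₂) := by
  rw [diWalk_iff_isChain] at h
  rw [diWalk_iff_isChain, diWalk_iff_isChain]
  obtain ⟨hc, hh, hl⟩ := h
  obtain ⟨hc₁, hc₂⟩ := List.isChain_split.mp hc
  refine ⟨⟨hc₁, ?_, by simp⟩, ⟨hc₂, rfl, ?_⟩⟩
  · cases l₁ <;> simpa using hh
  · simpa [List.getLast?_append] using hl

theorem Sat.reflTransGen (h : Sat G p a b) : ReflTransGen G a b :=
  let ⟨_, hl, _⟩ := h
  hl.reflTransGen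

theorem sat_of_diWalk_of_forall_not_mem (h : DiWalk G a b l) (hl : ∀ x ∈ l, x ∉ p) :
    Sat G p a b :=
  ⟨l, h, fun x hx => hl x (List.mem_of_mem_tail (List.dropLast_subset _ hx))⟩

theorem Sat.trans (h₁ : Sat G p a w) (h₂ : Sat G p w b) (hw : w ∉ p) : Sat G p a b := by
  obtain ⟨l₁, hw₁, hi₁⟩ := h₁
  obtain ⟨l₂, hw₂, hi₂⟩ := h₂
  refine ⟨l₁ ++ l₂.tail, hw₁.append hw₂, ?_⟩
  obtain ⟨s, rfl⟩ := List.getLast?_eq_some_iff.mp hw₁.2.2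
  obtain ⟨t, rfl⟩ := List.head?_eq_some_iff.mp hw₂.2.1
  intro x hx
  rcases s with _ | ⟨y, s⟩
  · exact hi₂ x (by simpa using hx)
  · simp only [List.cons_append, List.tail_cons, List.append_assoc, List.nil_append,
      List.dropLast_append_of_ne_nil (List.cons_ne_nil w t), List.mem_append,
      List.dropLast_concat] at hx hi₁
    rcases hx with hx | hx
    · exact hi₁ x hx
    · rcases t with _ | ⟨z, t⟩
      · simp at hx
      · rw [List.dropLast_cons_of_ne_nil (List.cons_ne_nil z t), List.mem_cons] at hx
        rcases hx with rfl | hx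
        · exact hw
        · exact hi₂ x hx

theorem DiWalk.exists_sat_first (h : DiWalk G a b l) (hmeet : ∃ x ∈ l, x ∈ p) :
    ∃ m : Fin p.length, Sat G p a (p.get m) ∧ ∃ l', DiWalk G (p.get m) b l' := by
  obtain ⟨l₁, x, l₂, rfl, hx, hl₁⟩ := List.exists_append_cons_first hmeet
  obtain ⟨hpre, hsuf⟩ := h.split
  obtain ⟨m, rfl⟩ := List.get_of_mem hx
  refine ⟨m, ⟨_, hpre, fun y hy => hl₁ y ?_⟩, _, hsuf⟩
  rw [← List.tail_dropLast, List.dropLast_concat] at hy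
  exact List.mem_of_mem_tail hy

theorem DiWalk.exists_sat_last (h : DiWalk G a b l) (hmeet : ∃ x ∈ l, x ∈ p) :
    ∃ m : Fin p.length, (∃ l', DiWalk G a (p.get m) l') ∧ Sat G p (p.get m) b := by
  obtain ⟨l₁, x, l₂, rfl, hx, hl₂⟩ := List.exists_append_cons_last hmeet
  obtain ⟨hpre, hsuf⟩ := h.split
  obtain ⟨m, rfl⟩ := List.get_of_mem hx
  exact ⟨m, ⟨_, hpre⟩, _, hsuf, fun y hy => hl₂ y (List.dropLast_subset _ hy)⟩

theorem exists_mem_layer {m₀ : Fin p.length} (h : Sat G p (p.get m₀) w) (hw : w ∉ p) :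
    ∃ m, m₀ ≤ m ∧ w ∈ Layer G p m := by
  classical
  obtain ⟨m, hm, hmax⟩ := (Finset.univ.filter fun m => Sat G p (p.get m) w).exists_max_image id
    ⟨m₀, by simpa using h⟩
  simp only [Finset.mem_filter, Finset.mem_univ, true_and, id] at hm hmax
  exact ⟨m, hmax m₀ h, hw, hm, fun j hj hj' => (hmax j hj').not_gt hj⟩

theorem exists_mem_rlayer {m₀ : Fin p.length} (h : Sat G p w (p.get m₀)) (hw : w ∉ p) :
    ∃ m, m ≤ m₀ ∧ w ∈ RLayer G p m := by
  classical
  obtain ⟨m, hm, hmin⟩ := (Finset.univ.filter fun m => Sat G p w (p.get m)).exists_min_image id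
    ⟨m₀, by simpa using h⟩
  simp only [Finset.mem_filter, Finset.mem_univ, true_and, id] at hm hmin
  exact ⟨m, hmin m₀ h, hw, hm, fun j hj hj' => (hmin j hj').not_gt hj⟩

theorem DiWalk.reflTransGen_of_sat_first
    (hA : ∀ m, Sat G p a (p.get m) → ReflTransGen G c (p.get m))
    (h : DiWalk G a b l) (hmeet : ∃ x ∈ l, x ∈ p) : ReflTransGen G c b := by
  obtain ⟨m, hm, _, hl'⟩ := h.exists_sat_first hmeet
  exact (hA m hm).trans hl'.reflTransGen

theorem DiWalk.reflTransGen_of_sat_last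
    (hB : ∀ m, Sat G p (p.get m) b → ReflTransGen G (p.get m) c)
    (h : DiWalk G a b l) (hmeet : ∃ x ∈ l, x ∈ p) : ReflTransGen G a c := by
  obtain ⟨m, ⟨_, hl'⟩, hm⟩ := h.exists_sat_last hmeet
  exact hl'.reflTransGen.trans (hB m hm)

def sconnLayers (G : V → V → Prop) (p : List V) (i : Fin p.length) : Set V :=
  {w | ∃ m : Fin p.length, SConn G (p.get m) (p.get i) ∧
    (w = p.get m ∨ w ∈ Layer G p m ∨ w ∈ RLayer G p m)}

variable {i : Fin p.length}

theorem exists_sconn_mem_layer (hchain : p.IsChain G)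
    (hA : ∀ m, Sat G p a (p.get m) → ReflTransGen G (p.get i) (p.get m))
    (hB : ∀ m, Sat G p (p.get m) b → ReflTransGen G (p.get m) (p.get i))
    (hpre : DiWalk G a w l₁) (hsuf : DiWalk G w b l₂) (hw : w ∉ p)
    (hmeet : ∃ x ∈ l₁, x ∈ p) :
    ∃ m, SConn G (p.get m) (p.get i) ∧ w ∈ Layer G p m := by
  obtain ⟨m₁, ⟨_, hl'⟩, hsat₁⟩ := hpre.exists_sat_last hmeet
  obtain ⟨m, hm₁m, hm⟩ := exists_mem_layer hsat₁ hw
  have hreach : ReflTransGen G (p.get i) (p.get m) :=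
    (hl'.reflTransGen_of_sat_first hA ⟨_, hl'.getLast_mem, List.get_mem ..⟩).trans
      (hchain.reflTransGen_get hm₁m)
  refine ⟨m, ⟨?_, hreach⟩, hm⟩
  by_cases hav : ∀ x ∈ l₂, x ∉ p
  · exact hB m (hm.2.1.trans (sat_of_diWalk_of_forall_not_mem hsuf hav) hw)
  · exact hm.2.1.reflTransGen.trans (hsuf.reflTransGen_of_sat_last hB (by simpa using hav))

theorem exists_sconn_mem_rlayer (hchain : p.IsChain G)
    (hA : ∀ m, Sat G p a (p.get m) → ReflTransGen G (p.get i) (p.get m))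
    (hB : ∀ m, Sat G p (p.get m) b → ReflTransGen G (p.get m) (p.get i))
    (hpre : DiWalk G a w l₁) (hsuf : DiWalk G w b l₂) (hw : w ∉ p)
    (hav : ∀ x ∈ l₁, x ∉ p) (hmeet : ∃ x ∈ l₂, x ∈ p) :
    ∃ m, SConn G (p.get m) (p.get i) ∧ w ∈ RLayer G p m := by
  obtain ⟨m₀, hsat₀, _, hl'⟩ := hsuf.exists_sat_first hmeet
  obtain ⟨m, hmm₀, hm⟩ := exists_mem_rlayer hsat₀ hw
  refine ⟨m, ⟨?_, hA m ((sat_of_diWalk_of_forall_not_mem hpre hav).trans hm.2.1 hw)⟩, hm⟩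
  exact (hchain.reflTransGen_get hmm₀).trans
    (hl'.reflTransGen_of_sat_last hB ⟨_, hl'.head_mem, List.get_mem ..⟩)

theorem mem_sconnLayers_of_diWalk (hchain : p.IsChain G)
    (hA : ∀ m, Sat G p a (p.get m) → ReflTransGen G (p.get i) (p.get m))
    (hB : ∀ m, Sat G p (p.get m) b → ReflTransGen G (p.get m) (p.get i))
    (hl : DiWalk G a b l) (hmeet : ∃ x ∈ l, x ∈ p) (hw : w ∈ l) : w ∈ sconnLayers G p i := by
  obtain ⟨l₁, l₂, rfl⟩ := List.append_of_mem hw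
  obtain ⟨hpre, hsuf⟩ := hl.split
  by_cases hwp : w ∈ p
  · obtain ⟨m, rfl⟩ := List.get_of_mem hwp
    exact ⟨m, ⟨hsuf.reflTransGen_of_sat_last hB ⟨_, hsuf.head_mem, hwp⟩,
      hpre.reflTransGen_of_sat_first hA ⟨_, hpre.getLast_mem, hwp⟩⟩, .inl rfl⟩
  by_cases hav : ∀ x ∈ l₁ ++ [w], x ∉ p
  · obtain ⟨x, hx, hxp⟩ := hmeet
    have hx₂ : x ∈ w :: l₂ :=
      (List.mem_append.mp hx).resolve_left fun h => hav x (List.mem_append_left _ h) hxp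
    obtain ⟨m, hm, hmem⟩ := exists_sconn_mem_rlayer hchain hA hB hpre hsuf hwp hav ⟨x, hx₂, hxp⟩
    exact ⟨m, hm, .inr (.inr hmem)⟩
  · obtain ⟨m, hm, hmem⟩ :=
      exists_sconn_mem_layer hchain hA hB hpre hsuf hwp (by simpa using hav)
    exact ⟨m, hm, .inr (.inl hmem)⟩

end

theorem stmt_16_general {V : Type*} (G : V → V → Prop) (p : List V)
    (hchain : List.Chain' G p) (u v : V)
    (i j : Fin p.length)
    (hi1 : Sat G p u (p.get i))
    (hi2 : ∀ i' : Fin p.length, Sat G p u (p.get i') → i ≤ i')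
    (hj1 : Sat G p (p.get j) v)
    (hj2 : ∀ j' : Fin p.length, Sat G p (p.get j') v → j' ≤ j)
    (hsc : SConn G (p.get i) (p.get j))
    (istar : Fin p.length)
    (histar1 : SConn G (p.get istar) (p.get i))
    (histar2 : ∀ m : Fin p.length, SConn G (p.get m) (p.get i) → m ≤ istar)
    (W : Set V)
    (hW : W = {w | ∃ m : Fin p.length, SConn G (p.get m) (p.get i) ∧
      (w = p.get m ∨ w ∈ Layer G p m ∨ w ∈ RLayer G p m)}) :
    (∀ l, DiWalk G u v l → (∃ w ∈ l, w ∈ p) → ∀ w ∈ l, w ∈ W) ∧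
    (∃ l, DiWalk G u (p.get istar) l ∧ ∀ w ∈ l, w ∈ W) ∧
    (∃ l, DiWalk G (p.get istar) v l ∧ ∀ w ∈ l, w ∈ W) := by
  subst hW
  have hu : ∀ m, Sat G p u (p.get m) → ReflTransGen G (p.get i) (p.get m) :=
    fun m h => hchain.reflTransGen_get (hi2 m h)
  have hv : ∀ m, Sat G p (p.get m) v → ReflTransGen G (p.get m) (p.get i) :=
    fun m h => (hchain.reflTransGen_get (hj2 m h)).trans hsc.2
  refine ⟨fun l hl hmeet w => mem_sconnLayers_of_diWalk hchain hu hv hl hmeet, ?_, ?_⟩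
  · obtain ⟨l₀, hl₀, -⟩ := hi1
    obtain ⟨q, hq⟩ := exists_diWalk_of_reflTransGen
      (hchain.reflTransGen_get (histar2 i ⟨.refl, .refl⟩))
    have hwalk := hl₀.append hq
    exact ⟨_, hwalk, fun w => mem_sconnLayers_of_diWalk hchain hu
      (fun m h => h.reflTransGen.trans histar1.1) hwalk ⟨_, hwalk.getLast_mem, List.get_mem ..⟩⟩
  · obtain ⟨l₁, hl₁, -⟩ := hj1
    obtain ⟨q, hq⟩ := exists_diWalk_of_reflTransGen (histar1.1.trans hsc.1)
    have hwalk := hq.append hl₁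
    exact ⟨_, hwalk, fun w => mem_sconnLayers_of_diWalk hchain
      (fun m h => histar1.2.trans h.reflTransGen) hv hwalk ⟨_, hwalk.head_mem, List.get_mem ..⟩⟩

/-- if some `u → v` path meets `V(P)`, `first*(u) = p.get i` and
`last*(v) = p.get j` exist and are strongly connected in `G`, `p* = p.get istar` is
the latest vertex of `P` strongly connected to `p.get i`, and `W` is the union of
`{p_m} ∪ L_m ∪ L^R_m` over all `m` with `p_m` strongly connected to `p.get i`, then
every `u → v` walk meeting `V(P)` lies entirely in `G[W]`, `u` reaches `p*` in `G[W]`,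
and `p*` reaches `v` in `G[W]`. -/
theorem stmt_16 {V : Type*} (G : V → V → Prop) (p : List V)
    (hchain : List.Chain' G p) (hnodup : p.Nodup) (u v : V)
    (i j : Fin p.length)
    (hthrough : ∃ l, DiWalk G u v l ∧ ∃ w ∈ l, w ∈ p)
    (hi1 : Sat G p u (p.get i))
    (hi2 : ∀ i' : Fin p.length, Sat G p u (p.get i') → i ≤ i')
    (hj1 : Sat G p (p.get j) v)
    (hj2 : ∀ j' : Fin p.length, Sat G p (p.get j') v → j' ≤ j)
    (hsc : SConn G (p.get i) (p.get j))
    (istar : Fin p.length)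
    (histar1 : SConn G (p.get istar) (p.get i))
    (histar2 : ∀ m : Fin p.length, SConn G (p.get m) (p.get i) → m ≤ istar)
    (W : Set V)
    (hW : W = {w | ∃ m : Fin p.length, SConn G (p.get m) (p.get i) ∧
      (w = p.get m ∨ w ∈ Layer G p m ∨ w ∈ RLayer G p m)}) :
    (∀ l, DiWalk G u v l → (∃ w ∈ l, w ∈ p) → ∀ w ∈ l, w ∈ W) ∧
    (∃ l, DiWalk G u (p.get istar) l ∧ ∀ w ∈ l, w ∈ W) ∧
    (∃ l, DiWalk G (p.get istar) v l ∧ ∀ w ∈ l, w ∈ W) :=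
  stmt_16_general G p hchain u v i j hi1 hi2 hj1 hj2 hsc istar histar1 histar2 W hW
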